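/- Assume the reduction-by-stages setting and fix an sl₂-triple (e₁,h₁,f₁) with e₁ ∈ 𝔤₂(q₁) ∩ 𝔤₂(q₂) and h₁ ∈ 𝔤₀(q₁) ∩ 𝔤₀(q₂). Then ⁅f₀, e₁⁆ = 0; equivalently f₂ = f₁ + f₀ lies in f₁ + ker(ad e₁), so that χ₂ := B(f₂,·) belongs to the Slodowy slice S₁ := {ξ ∈ 𝔤* : (ξ − χ₁)(⁅e₁,x⁆) = 0 for all x ∈ 𝔤}. -/

import Mathlib

open LieAlgebra Module

noncomputable section

variable {L : Type*} [LieRing L] [LieAlgebra ℂ L]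

/-- The `j`-eigenspace of `ad q` on the Lie algebra. -/
def gSp (q : L) (j : ℤ) : Submodule ℂ L where
  carrier := {x | ⁅q, x⁆ = (j : ℂ) • x}
  add_mem' {a b} ha hb := by
    simp only [Set.mem_setOf_eq] at *
    rw [lie_add, ha, hb, smul_add]
  zero_mem' := by simp
  smul_mem' c x hx := by
    simp only [Set.mem_setOf_eq] at *
    rw [lie_smul, hx, smul_comm]

/-- The grading by `q` (whose adjoint action is diagonalizable with integer eigenvalues)
is good for `f`. -/
structure IsGoodGrading (q f : L) : Prop where
  decomp : (⨆ j : ℤ, gSp q j) = ⊤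
  f_mem : f ∈ gSp q (-2)
  inj : ∀ j : ℤ, 1 ≤ j → ∀ x ∈ gSp q j, ⁅f, x⁆ = 0 → x = 0
  surj : ∀ j : ℤ, j ≤ 1 → ∀ y ∈ gSp q (j - 2), ∃ x ∈ gSp q j, ⁅f, x⁆ = y

/-- `m` is a good algebra for `(f, q)`: `m = l ⊕ ⨁_{j ≥ 2} 𝔤_j(q)` for a Lagrangian
subspace `l` of `𝔤₁(q)` with respect to the symplectic form `(x, y) ↦ B f ⁅x, y⁆`. -/
def IsGoodAlgebra (B : LinearMap.BilinForm ℂ L) (q f : L) (m : Submodule ℂ L) : Prop :=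
  ∃ l : Submodule ℂ L, l ≤ gSp q 1 ∧
    (∀ x ∈ l, ∀ y ∈ l, B f ⁅x, y⁆ = 0) ∧
    (∀ x ∈ gSp q 1, (∀ y ∈ l, B f ⁅x, y⁆ = 0) → x ∈ l) ∧
    m = l ⊔ ⨆ j : ℤ, ⨆ _ : 2 ≤ j, gSp q j

/-! The bracket `v = ⁅f₀, e₁⁆` has `q₁`-degree `0 + 2 = 2`, so it lies in `m₁ ⊆ m₂`. Since `q₀`
commutes with `f₁`, both `f₁` and `f₂` have `q₂`-degree `-2`, hence `v` has `q₂`-degree `0`. A good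
algebra for `q₂` lives in positive `q₂`-degrees, and eigenspaces of `ad q₂` are independent, so
`v = 0`; invariance of `B` then gives the Slodowy-slice condition. -/

open Module.End

lemma gSp_eq_eigenspace (q : L) (j : ℤ) : gSp q j = (ad ℂ L q).eigenspace (j : ℂ) := by
  ext x
  rw [mem_eigenspace_iff, ad_apply]
  rfl

lemma lie_mem_gSp {q x y : L} {i j : ℤ} (hx : x ∈ gSp q i) (hy : y ∈ gSp q j) :
    ⁅x, y⁆ ∈ gSp q (i + j) := by
  change ⁅q, ⁅x, y⁆⁆ = ((i + j : ℤ) : ℂ) • ⁅x, y⁆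
  change ⁅q, x⁆ = (i : ℂ) • x at hx
  change ⁅q, y⁆ = (j : ℂ) • y at hy
  rw [leibniz_lie, hx, hy, smul_lie, lie_smul, Int.cast_add, add_smul, add_comm]

lemma mem_gSp_of_lie_sub_eq_zero {q q' x : L} {j : ℤ} (h : ⁅q' - q, x⁆ = 0)
    (hx : x ∈ gSp q j) : x ∈ gSp q' j := by
  change ⁅q', x⁆ = (j : ℂ) • x
  rwa [← sub_add_cancel q' q, add_lie, h, zero_add]

lemma disjoint_gSp_zero_iSup_gSp_pos (q : L) :
    Disjoint (gSp q 0) (⨆ j : ℤ, ⨆ _ : 0 < j, gSp q j) := by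
  refine ((eigenspaces_iSupIndep (ad ℂ L q)) 0).mono ?_ ?_
  · simp [gSp_eq_eigenspace]
  · refine iSup₂_le fun j hj => ?_
    rw [gSp_eq_eigenspace]
    exact le_iSup₂_of_le (j : ℂ) (by exact_mod_cast hj.ne') le_rfl

namespace IsGoodAlgebra

variable {B : LinearMap.BilinForm ℂ L} {q f : L} {m : Submodule ℂ L}

lemma gSp_le (hm : IsGoodAlgebra B q f m) {j : ℤ} (hj : 2 ≤ j) : gSp q j ≤ m := by
  obtain ⟨l, -, -, -, rfl⟩ := hm
  exact le_sup_of_le_right (le_iSup₂_of_le j hj le_rfl)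

lemma le_iSup_gSp_pos (hm : IsGoodAlgebra B q f m) : m ≤ ⨆ j : ℤ, ⨆ _ : 0 < j, gSp q j := by
  obtain ⟨l, hl, -, -, rfl⟩ := hm
  refine sup_le (hl.trans (le_iSup₂_of_le 1 one_pos le_rfl)) ?_
  exact iSup₂_le fun j hj => le_iSup₂_of_le j (by omega) le_rfl

lemma disjoint_gSp_zero (hm : IsGoodAlgebra B q f m) : Disjoint m (gSp q 0) :=
  (disjoint_gSp_zero_iSup_gSp_pos q).symm.mono_left hm.le_iSup_gSp_pos

end IsGoodAlgebra

theorem f₀_commutes_with_e₁_general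
    (B : LinearMap.BilinForm ℂ L)
    (hBinv : ∀ x y z : L, B ⁅x, y⁆ z = B x ⁅y, z⁆)
    (f₁ f₂ q₁ q₂ : L)
    (hgood₁ : IsGoodGrading q₁ f₁) (hgood₂ : IsGoodGrading q₂ f₂)
    (m₁ m₂ m₀ : Submodule ℂ L)
    (hma₁ : IsGoodAlgebra B q₁ f₁ m₁) (hma₂ : IsGoodAlgebra B q₂ f₂ m₂)
    (hsum : m₁ ⊔ m₀ = m₂)
    (hf₀ : f₂ - f₁ ∈ gSp q₁ 0)
    (hq₀f₁ : ⁅q₂ - q₁, f₁⁆ = 0)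
    (e₁ : L)
    (he₁ : e₁ ∈ gSp q₁ 2 ⊓ gSp q₂ 2) :
    ⁅f₂ - f₁, e₁⁆ = 0 ∧
    (∀ x : L, (B f₂ - B f₁) ⁅e₁, x⁆ = 0) := by
  have hf₁ : f₁ ∈ gSp q₂ (-2) := mem_gSp_of_lie_sub_eq_zero hq₀f₁ hgood₁.f_mem
  have hf₀₂ : f₂ - f₁ ∈ gSp q₂ (-2) := sub_mem hgood₂.f_mem hf₁
  have hv₁ : ⁅f₂ - f₁, e₁⁆ ∈ gSp q₁ 2 := by simpa using lie_mem_gSp hf₀ he₁.1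
  have hv₂ : ⁅f₂ - f₁, e₁⁆ ∈ gSp q₂ 0 := by simpa using lie_mem_gSp hf₀₂ he₁.2
  have hvm₂ : ⁅f₂ - f₁, e₁⁆ ∈ m₂ := hsum ▸ Submodule.mem_sup_left (hma₁.gSp_le le_rfl hv₁)
  have hv : ⁅f₂ - f₁, e₁⁆ = 0 := Submodule.disjoint_def.mp hma₂.disjoint_gSp_zero _ hvm₂ hv₂
  refine ⟨hv, fun x => ?_⟩
  rw [← map_sub, ← hBinv, hv, map_zero, LinearMap.zero_apply]

/-- `⁅f₀, e₁⁆ = 0`, so `f₂ ∈ f₁ + ker (ad e₁)` and `χ₂ = B(f₂,·)` lies in the Slodowy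
slice `S₁`. -/
theorem f₀_commutes_with_e₁
    [FiniteDimensional ℂ L] [LieAlgebra.IsSimple ℂ L]
    (B : LinearMap.BilinForm ℂ L)
    (hBsymm : ∀ x y : L, B x y = B y x)
    (hBnondeg : ∀ x : L, (∀ y : L, B x y = 0) → x = 0)
    (hBinv : ∀ x y z : L, B ⁅x, y⁆ z = B x ⁅y, z⁆)
    (f₁ f₂ q₁ q₂ : L)
    (hnil₁ : IsNilpotent (ad ℂ L f₁)) (hnil₂ : IsNilpotent (ad ℂ L f₂))
    (hgood₁ : IsGoodGrading q₁ f₁) (hgood₂ : IsGoodGrading q₂ f₂)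
    (m₁ m₂ m₀ : Submodule ℂ L)
    (hma₁ : IsGoodAlgebra B q₁ f₁ m₁) (hma₂ : IsGoodAlgebra B q₂ f₂ m₂)
    (hq₁q₂ : ⁅q₁, q₂⁆ = 0)
    (hsum : m₁ ⊔ m₀ = m₂) (hdisj : m₁ ⊓ m₀ = ⊥)
    (hm₀alg : ∀ x ∈ m₀, ∀ y ∈ m₀, ⁅x, y⁆ ∈ m₀)
    (hm₀q₁ : ∀ x ∈ m₀, ⁅q₁, x⁆ ∈ m₀) (hm₀q₂ : ∀ x ∈ m₀, ⁅q₂, x⁆ ∈ m₀)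
    (hideal : ∀ x ∈ m₂, ∀ y ∈ m₁, ⁅x, y⁆ ∈ m₁)
    (hf₀ : f₂ - f₁ ∈ gSp q₁ 0) (hm₀0 : m₀ ≤ gSp q₁ 0)
    (hq₀f₁ : ⁅q₂ - q₁, f₁⁆ = 0)
    (e₁ h₁ : L)
    (t1 : ⁅h₁, e₁⁆ = (2 : ℂ) • e₁) (t2 : ⁅h₁, f₁⁆ = (-2 : ℂ) • f₁) (t3 : ⁅e₁, f₁⁆ = h₁)
    (he₁ : e₁ ∈ gSp q₁ 2 ⊓ gSp q₂ 2) (hh₁ : h₁ ∈ gSp q₁ 0 ⊓ gSp q₂ 0) :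
    ⁅f₂ - f₁, e₁⁆ = 0 ∧
    (∀ x : L, (B f₂ - B f₁) ⁅e₁, x⁆ = 0) :=
  f₀_commutes_with_e₁_general B hBinv f₁ f₂ q₁ q₂ hgood₁ hgood₂ m₁ m₂ m₀ hma₁ hma₂ hsum hf₀ hq₀f₁ e₁
    he₁
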